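/- arXiv:1302.6550 — 3 statements merged into one kernel-verified Lean document; each statement's English description precedes it below -/
import Mathlib

section
/- Let f: I → ℝ be a C² function on an interval I ⊂ ℝ, and suppose |f''(θ)| ≥ c > 0 for all θ ∈ I. Then for every λ > 0, the Lebesgue measure of {θ ∈ I : |f(θ)| ≤ λ} is at most C·(λ/c)^(1/2) for an absolute constant C. -/
/-!
Split the sublevel set `{|f| ≤ λ}` according to the size of `f'` relative to a threshold `s`.
Where `|f'| ≤ s`, the map `f'` expands distances by at least `c`, so that piece has length at
most `2s/c`; where `f' ≥ s` (resp. `f' ≤ -s`), monotonicity of `f'` makes `f` (resp. `-f`)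
expand distances by at least `s`, so each of these pieces has length at most `2λ/s`.
The choice `s = √(λc)` balances the bounds and gives `6 √(λ/c)`.
-/

open MeasureTheory Set

lemma mul_sub_le_sub_of_le_hasDerivAt {D : Set ℝ} (hD : Convex ℝ D) {f f' : ℝ → ℝ} {C : ℝ}
    (hf : ∀ x ∈ D, HasDerivAt f (f' x) x) (hC : ∀ x ∈ D, C ≤ f' x) :
    ∀ x ∈ D, ∀ y ∈ D, x ≤ y → C * (y - x) ≤ f y - f x :=
  hD.mul_sub_le_image_sub_of_le_deriv
    (fun x hx => (hf x hx).continuousAt.continuousWithinAt)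
    (fun x hx => (hf x (interior_subset hx)).differentiableAt.differentiableWithinAt)
    (fun x hx => (hf x (interior_subset hx)).deriv ▸ hC x (interior_subset hx))

lemma volume_le_of_mul_sub_le_sub {S : Set ℝ} {g : ℝ → ℝ} {s M : ℝ} (hs : 0 < s)
    (hg : ∀ x ∈ S, ∀ y ∈ S, x ≤ y → s * (y - x) ≤ g y - g x) (hM : ∀ x ∈ S, |g x| ≤ M) :
    volume S ≤ ENNReal.ofReal (2 * M / s) := by
  have hdist : ∀ x ∈ S, ∀ y ∈ S, x ≤ y → y - x ≤ 2 * M / s := fun x hx y hy hxy => by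
    rw [le_div_iff₀ hs]
    linarith [hg x hx y hy hxy, abs_le.1 (hM x hx), abs_le.1 (hM y hy)]
  refine (Real.volume_le_diam S).trans (Metric.ediam_le fun x hx y hy => ?_)
  rw [edist_dist, Real.dist_eq]
  refine ENNReal.ofReal_le_ofReal ?_
  rcases le_total x y with hxy | hyx
  · rw [abs_sub_comm, abs_of_nonneg (sub_nonneg.2 hxy)]
    exact hdist x hx y hy hxy
  · rw [abs_of_nonneg (sub_nonneg.2 hyx)]
    exact hdist y hy x hx hyx

lemma volume_sublevel_le_of_mul_sub_le_deriv_sub {K : Set ℝ} (hK : Convex ℝ K)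
    {f f' : ℝ → ℝ} {c s lam : ℝ} (hc : 0 < c) (hs : 0 < s) (hlam : 0 ≤ lam)
    (hf : ∀ x ∈ K, HasDerivAt f (f' x) x)
    (hf' : ∀ x ∈ K, ∀ y ∈ K, x ≤ y → c * (y - x) ≤ f' y - f' x) :
    volume {θ ∈ K | |f θ| ≤ lam} ≤ ENNReal.ofReal (2 * s / c + 4 * lam / s) := by
  set E := {θ ∈ K | |f θ| ≤ lam}
  have hmono : ∀ x ∈ K, ∀ y ∈ K, x ≤ y → f' x ≤ f' y := fun x hx y hy hxy => by
    nlinarith [hf' x hx y hy hxy]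
  have hsub {x y : ℝ} (hx : x ∈ K) (hy : y ∈ K) : Icc x y ⊆ K := hK.ordConnected.out hx hy
  have hdown : volume {θ ∈ E | f' θ ≤ -s} ≤ ENNReal.ofReal (2 * lam / s) := by
    refine volume_le_of_mul_sub_le_sub (g := -f) hs ?_ fun θ hθ => by simpa using hθ.1.2
    rintro x ⟨⟨hx, -⟩, -⟩ y ⟨⟨hy, -⟩, hys⟩ hxy
    refine mul_sub_le_sub_of_le_hasDerivAt (convex_Icc x y) (f' := -f')
      (fun θ hθ => (hf θ (hsub hx hy hθ)).neg)
      (fun θ hθ => ?_) x (left_mem_Icc.2 hxy) y (right_mem_Icc.2 hxy) hxy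
    linarith [hmono θ (hsub hx hy hθ) y hy hθ.2, show (-f') θ = -f' θ from rfl]
  have hflat : volume {θ ∈ E | |f' θ| ≤ s} ≤ ENNReal.ofReal (2 * s / c) :=
    volume_le_of_mul_sub_le_sub hc (fun x hx y hy => hf' x hx.1.1 y hy.1.1) fun θ hθ => hθ.2
  have hup : volume {θ ∈ E | s ≤ f' θ} ≤ ENNReal.ofReal (2 * lam / s) := by
    refine volume_le_of_mul_sub_le_sub hs ?_ fun θ hθ => hθ.1.2
    rintro x ⟨⟨hx, -⟩, hxs⟩ y ⟨⟨hy, -⟩, -⟩ hxy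
    exact mul_sub_le_sub_of_le_hasDerivAt (convex_Icc x y)
      (fun θ hθ => hf θ (hsub hx hy hθ))
      (fun θ hθ => hxs.trans (hmono x hx θ (hsub hx hy hθ) hθ.1))
      x (left_mem_Icc.2 hxy) y (right_mem_Icc.2 hxy) hxy
  have hcover : E ⊆ {θ ∈ E | f' θ ≤ -s} ∪ {θ ∈ E | |f' θ| ≤ s} ∪ {θ ∈ E | s ≤ f' θ} := by
    intro θ hθ
    rcases le_total (f' θ) (-s) with h | h
    · exact Or.inl (Or.inl ⟨hθ, h⟩)
    rcases le_total (f' θ) s with h' | h'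
    · exact Or.inl (Or.inr ⟨hθ, abs_le.2 ⟨h, h'⟩⟩)
    · exact Or.inr ⟨hθ, h'⟩
  calc volume E
      ≤ volume {θ ∈ E | f' θ ≤ -s} + volume {θ ∈ E | |f' θ| ≤ s}
          + volume {θ ∈ E | s ≤ f' θ} :=
        (measure_mono hcover).trans <|
          (measure_union_le _ _).trans (add_le_add_left (measure_union_le _ _) _)
    _ ≤ ENNReal.ofReal (2 * lam / s) + ENNReal.ofReal (2 * s / c)
          + ENNReal.ofReal (2 * lam / s) := by gcongr
    _ = ENNReal.ofReal (2 * s / c + 4 * lam / s) := by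
        rw [← ENNReal.ofReal_add (by positivity) (by positivity),
          ← ENNReal.ofReal_add (by positivity) (by positivity)]
        ring_nf

lemma toReal_volume_sublevel_le_of_le_deriv2 {K : Set ℝ} (hK : Convex ℝ K)
    {f f' f'' : ℝ → ℝ} {c lam : ℝ} (hc : 0 < c) (hlam : 0 < lam)
    (hf : ∀ x ∈ K, HasDerivAt f (f' x) x) (hf' : ∀ x ∈ K, HasDerivAt f' (f'' x) x)
    (hf'' : ∀ x ∈ K, c ≤ f'' x) :
    (volume {θ ∈ K | |f θ| ≤ lam}).toReal ≤ 6 * (lam / c) ^ ((1 : ℝ) / 2) := by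
  rw [← Real.sqrt_eq_rpow]
  set t := √(lam / c)
  have ht : 0 < t := by positivity
  have ht2 : t ^ 2 * c = lam := by
    rw [Real.sq_sqrt (by positivity), div_mul_cancel₀ _ hc.ne']
  -- the threshold `s = c t = √(λc)`
  have hbound := volume_sublevel_le_of_mul_sub_le_deriv_sub hK hc (mul_pos hc ht) hlam.le hf
    (mul_sub_le_sub_of_le_hasDerivAt hK hf' hf'')
  have hsum : 2 * (c * t) / c + 4 * lam / (c * t) = 6 * t := by
    field_simp
    rw [← ht2]
    ring
  rw [hsum] at hbound
  exact ENNReal.toReal_le_of_le_ofReal (by positivity) hbound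

/-- Sub-level set estimate, k = 2 case: if `f ∈ C²(I)` with `|f''| ≥ c > 0` on the
interval `I = [a,b]`, then `|{θ ∈ I : |f(θ)| ≤ λ}| ≤ C (λ/c)^(1/2)` for an absolute
constant `C`. -/
theorem stmt_1 :
    ∃ C : ℝ, 0 < C ∧
      ∀ (a b : ℝ) (f f' f'' : ℝ → ℝ) (c : ℝ), 0 < c →
        (∀ θ ∈ Set.Icc a b, HasDerivAt f (f' θ) θ) →
        (∀ θ ∈ Set.Icc a b, HasDerivAt f' (f'' θ) θ) →
        ContinuousOn f'' (Set.Icc a b) →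
        (∀ θ ∈ Set.Icc a b, c ≤ |f'' θ|) →
        ∀ lam : ℝ, 0 < lam →
          (volume {θ ∈ Set.Icc a b | |f θ| ≤ lam}).toReal ≤ C * (lam / c) ^ ((1:ℝ)/2) := by
  refine ⟨6, by norm_num, fun a b f f' f'' c hc hf hf' _ hf'' lam hlam => ?_⟩
  have hne : ∀ θ ∈ Icc a b, f'' θ ≠ 0 := fun θ hθ h0 => by
    have := hf'' θ hθ
    rw [h0, abs_zero] at this
    linarith
  -- Darboux: `f''` cannot change sign on `[a, b]`
  rcases hasDerivWithinAt_forall_lt_or_forall_gt_of_forall_ne (convex_Icc a b)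
    (fun θ hθ => (hf' θ hθ).hasDerivWithinAt) hne with hneg | hpos
  · have hset : {θ ∈ Icc a b | |f θ| ≤ lam} = {θ ∈ Icc a b | |(-f) θ| ≤ lam} := by
      simp only [Pi.neg_apply, abs_neg]
    rw [hset]
    exact toReal_volume_sublevel_le_of_le_deriv2 (convex_Icc a b) hc hlam
      (fun θ hθ => (hf θ hθ).neg) (fun θ hθ => (hf' θ hθ).neg)
      fun θ hθ => (abs_of_neg (hneg θ hθ)) ▸ hf'' θ hθ
  · exact toReal_volume_sublevel_le_of_le_deriv2 (convex_Icc a b) hc hlam hf hf'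
      fun θ hθ => (abs_of_pos (hpos θ hθ)) ▸ hf'' θ hθ
end

section
/- Let γ: [0,1] → S² be a C² curve, and suppose there exist δ > 0 and, for each x ∈ S², constants witnessing max{|γ(θ)·x|, |γ'(θ)·x|, |γ''(θ)·x|} ≥ δ for all θ, together with ε > 0 such that |θ - θ'| < ε implies the differences of all three quantities are less than δ. Then for each x ∈ S², the function θ ↦ γ(θ)·x has at most two zeros in any subinterval of [0,1] of length ε. -/
open scoped RealInnerProductSpace


lemma no_three_zeros (f f' f'' : ℝ → ℝ) (δ ε : ℝ) (hδ : 0 < δ)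
    (hd1 : ∀ θ ∈ Set.Icc (0:ℝ) 1, HasDerivAt f (f' θ) θ)
    (hd2 : ∀ θ ∈ Set.Icc (0:ℝ) 1, HasDerivAt f' (f'' θ) θ)
    (hnd : ∀ θ ∈ Set.Icc (0:ℝ) 1, δ ≤ max (max |f θ| |f' θ|) |f'' θ|)
    (hmod : ∀ θ ∈ Set.Icc (0:ℝ) 1, ∀ θ' ∈ Set.Icc (0:ℝ) 1, |θ - θ'| < ε →
      |f θ - f θ'| < δ ∧ |f' θ - f' θ'| < δ)
    (a b : ℝ) (hsub : Set.Icc a b ⊆ Set.Icc (0:ℝ) 1) (hlen : b - a ≤ ε)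
    (θ₁ θ₂ θ₃ : ℝ) (h1 : θ₁ ∈ Set.Icc a b) (h2 : θ₂ ∈ Set.Icc a b)
    (h3 : θ₃ ∈ Set.Icc a b) (h12 : θ₁ < θ₂) (h23 : θ₂ < θ₃)
    (z1 : f θ₁ = 0) (z2 : f θ₂ = 0) (z3 : f θ₃ = 0) : False := by
  have hmem : ∀ t, θ₁ ≤ t → t ≤ θ₃ → t ∈ Set.Icc (0:ℝ) 1 := fun t ht1 ht3 =>
    hsub ⟨h1.1.trans ht1, ht3.trans h3.2⟩
  have hcf : ∀ s t : ℝ, θ₁ ≤ s → t ≤ θ₃ → ContinuousOn f (Set.Icc s t) := by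
    intro s t hs ht u hu
    exact (hd1 u (hmem u (hs.trans hu.1) (hu.2.trans ht))).continuousAt.continuousWithinAt
  have hcf' : ∀ s t : ℝ, θ₁ ≤ s → t ≤ θ₃ → ContinuousOn f' (Set.Icc s t) := by
    intro s t hs ht u hu
    exact (hd2 u (hmem u (hs.trans hu.1) (hu.2.trans ht))).continuousAt.continuousWithinAt
  obtain ⟨ζ₁, hζ₁, hfζ₁⟩ := exists_hasDerivAt_eq_zero h12 (hcf θ₁ θ₂ le_rfl h23.le)
    (z1.trans z2.symm) (fun u hu => hd1 u (hmem u hu.1.le (hu.2.le.trans h23.le)))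
  obtain ⟨ζ₂, hζ₂, hfζ₂⟩ := exists_hasDerivAt_eq_zero h23 (hcf θ₂ θ₃ h12.le le_rfl)
    (z2.trans z3.symm) (fun u hu => hd1 u (hmem u (h12.le.trans hu.1.le) hu.2.le))
  have hζζ : ζ₁ < ζ₂ := hζ₁.2.trans hζ₂.1
  obtain ⟨ξ, hξ, hfξ⟩ := exists_hasDerivAt_eq_zero hζζ
    (hcf' ζ₁ ζ₂ hζ₁.1.le hζ₂.2.le) (hfζ₁.trans hfζ₂.symm)
    (fun u hu => hd2 u (hmem u (hζ₁.1.le.trans hu.1.le) (hu.2.le.trans hζ₂.2.le)))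
  have hξ13 : θ₁ < ξ ∧ ξ < θ₃ := ⟨hζ₁.1.trans hξ.1, hξ.2.trans hζ₂.2⟩
  have hξm : ξ ∈ Set.Icc (0:ℝ) 1 := hmem ξ hξ13.1.le hξ13.2.le
  have hθ₁m : θ₁ ∈ Set.Icc (0:ℝ) 1 := hsub h1
  have hζ₁m : ζ₁ ∈ Set.Icc (0:ℝ) 1 := hmem ζ₁ hζ₁.1.le (hζ₁.2.le.trans h23.le)
  have hd1' : |ξ - θ₁| < ε := by
    rw [abs_of_pos (by linarith [hξ13.1])]
    have : ξ < b := lt_of_lt_of_le hξ13.2 h3.2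
    linarith [h1.1]
  have hd2' : |ξ - ζ₁| < ε := by
    rw [abs_of_pos (by linarith [hξ.1])]
    have : ξ < b := lt_of_lt_of_le hξ13.2 h3.2
    have : a ≤ θ₁ := h1.1
    linarith [hζ₁.1]
  have b1 := (hmod ξ hξm θ₁ hθ₁m hd1').1
  have b2 := (hmod ξ hξm ζ₁ hζ₁m hd2').2
  rw [z1, sub_zero] at b1
  rw [hfζ₁, sub_zero] at b2
  have := hnd ξ hξm
  rw [hfξ] at this
  simp only [abs_zero] at this
  have : δ ≤ max (max |f ξ| |f' ξ|) 0 := this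
  rcases le_max_iff.1 this with h | h
  · rcases le_max_iff.1 h with h' | h' <;> linarith
  · linarith

/-- If a C² curve `γ : [0,1] → S²` satisfies the uniform nondegeneracy bound
`max{|γ·x|, |γ'·x|, |γ''·x|} ≥ δ` and a uniform-continuity estimate at scale `ε`,
then for each `x ∈ S²` the function `θ ↦ γ(θ)·x` has at most two zeros in any
subinterval of `[0,1]` of length `ε`. -/
theorem stmt_5 (γ γ' γ'' : ℝ → EuclideanSpace ℝ (Fin 3))
    (hsphere : ∀ θ ∈ Set.Icc (0:ℝ) 1, ‖γ θ‖ = 1)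
    (hd1 : ∀ θ ∈ Set.Icc (0:ℝ) 1, HasDerivAt γ (γ' θ) θ)
    (hd2 : ∀ θ ∈ Set.Icc (0:ℝ) 1, HasDerivAt γ' (γ'' θ) θ)
    (hcont : ContinuousOn γ'' (Set.Icc (0:ℝ) 1))
    (δ : ℝ) (hδ : 0 < δ)
    (hnondeg : ∀ (x : EuclideanSpace ℝ (Fin 3)), ‖x‖ = 1 → ∀ θ ∈ Set.Icc (0:ℝ) 1,
      δ ≤ max (max |⟪γ θ, x⟫| |⟪γ' θ, x⟫|) |⟪γ'' θ, x⟫|)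
    (ε : ℝ) (hε : 0 < ε)
    (hmod : ∀ (x : EuclideanSpace ℝ (Fin 3)), ‖x‖ = 1 →
      ∀ θ ∈ Set.Icc (0:ℝ) 1, ∀ θ' ∈ Set.Icc (0:ℝ) 1, |θ - θ'| < ε →
        |⟪γ θ, x⟫ - ⟪γ θ', x⟫| < δ ∧ |⟪γ' θ, x⟫ - ⟪γ' θ', x⟫| < δ ∧
        |⟪γ'' θ, x⟫ - ⟪γ'' θ', x⟫| < δ) :
    ∀ (x : EuclideanSpace ℝ (Fin 3)), ‖x‖ = 1 →
      ∀ a b : ℝ, Set.Icc a b ⊆ Set.Icc (0:ℝ) 1 → b - a ≤ ε →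
        ∀ θ₁ ∈ Set.Icc a b, ∀ θ₂ ∈ Set.Icc a b, ∀ θ₃ ∈ Set.Icc a b,
          ⟪γ θ₁, x⟫ = 0 → ⟪γ θ₂, x⟫ = 0 → ⟪γ θ₃, x⟫ = 0 →
          θ₁ = θ₂ ∨ θ₁ = θ₃ ∨ θ₂ = θ₃ := by
  intro x hx a b hsub hlen θ₁ h1 θ₂ h2 θ₃ h3 z1 z2 z3
  by_contra hcon
  push_neg at hcon
  obtain ⟨n12, n13, n23⟩ := hcon
  set f : ℝ → ℝ := fun θ => ⟪γ θ, x⟫ with hf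
  set F' : ℝ → ℝ := fun θ => ⟪γ' θ, x⟫ with hF'
  set F'' : ℝ → ℝ := fun θ => ⟪γ'' θ, x⟫ with hF''
  have Hd1 : ∀ θ ∈ Set.Icc (0:ℝ) 1, HasDerivAt f (F' θ) θ := by
    intro θ hθ
    have := (hd1 θ hθ).inner ℝ (hasDerivAt_const θ x)
    simpa using this
  have Hd2 : ∀ θ ∈ Set.Icc (0:ℝ) 1, HasDerivAt F' (F'' θ) θ := by
    intro θ hθ
    have := (hd2 θ hθ).inner ℝ (hasDerivAt_const θ x)
    simpa using this
  have Hnd : ∀ θ ∈ Set.Icc (0:ℝ) 1, δ ≤ max (max |f θ| |F' θ|) |F'' θ| :=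
    fun θ hθ => hnondeg x hx θ hθ
  have Hmod : ∀ θ ∈ Set.Icc (0:ℝ) 1, ∀ θ' ∈ Set.Icc (0:ℝ) 1, |θ - θ'| < ε →
      |f θ - f θ'| < δ ∧ |F' θ - F' θ'| < δ := by
    intro θ hθ θ' hθ' h
    exact ⟨(hmod x hx θ hθ θ' hθ' h).1, (hmod x hx θ hθ θ' hθ' h).2.1⟩
  have key := no_three_zeros f F' F'' δ ε hδ Hd1 Hd2 Hnd Hmod a b hsub hlen
  rcases lt_trichotomy θ₁ θ₂ with l12 | e12 | g12
  · rcases lt_trichotomy θ₂ θ₃ with l23 | e23 | g23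
    · exact key θ₁ θ₂ θ₃ h1 h2 h3 l12 l23 z1 z2 z3
    · exact n23 e23
    · rcases lt_trichotomy θ₁ θ₃ with l13 | e13 | g13
      · exact key θ₁ θ₃ θ₂ h1 h3 h2 l13 g23 z1 z3 z2
      · exact n13 e13
      · exact key θ₃ θ₁ θ₂ h3 h1 h2 g13 l12 z3 z1 z2
  · exact n12 e12
  · rcases lt_trichotomy θ₁ θ₃ with l13 | e13 | g13
    · exact key θ₂ θ₁ θ₃ h2 h1 h3 g12 l13 z2 z1 z3
    · exact n13 e13
    · rcases lt_trichotomy θ₂ θ₃ with l23 | e23 | g23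
      · exact key θ₂ θ₃ θ₁ h2 h3 h1 l23 g13 z2 z3 z1
      · exact n23 e23
      · exact key θ₃ θ₂ θ₁ h3 h2 h1 g23 g12 z3 z2 z1
end

section
/- Let γ: U → S² be a C³ curve satisfying span{γ(θ), γ'(θ), γ''(θ)} = ℝ³ for all θ ∈ U. Define η(θ) = (γ(θ) × γ'(θ))/|γ(θ) × γ'(θ)|. Then η''(θ) · (η(θ) × η'(θ)) = |γ'(θ)|^(-3) · (γ(θ) · (γ'(θ) × γ''(θ)))² ≠ 0, and consequently span{η(θ), η'(θ), η''(θ)} = ℝ³ for every θ ∈ U. -/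
open scoped RealInnerProductSpace

/-- Cross product on `ℝ³` (as `EuclideanSpace ℝ (Fin 3)`). -/
noncomputable def cross3 (a b : EuclideanSpace ℝ (Fin 3)) : EuclideanSpace ℝ (Fin 3) :=
  (WithLp.equiv 2 (Fin 3 → ℝ)).symm
    ![a 1 * b 2 - a 2 * b 1, a 2 * b 0 - a 0 * b 2, a 0 * b 1 - a 1 * b 0]

/-!
Write `η = φ • v` with `v = γ × γ'` and `φ = ‖γ'‖⁻¹`; on the unit sphere `γ ⊥ γ'`, so
`‖v‖ = ‖γ'‖`. In `η'' · (η × η')` every term containing `φ'` or `φ''` pairs `v` or `v'` with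
itself, leaving `φ³ v'' · (v × v')`. Since `γ' × γ' = 0` we have `v' = γ × γ''` and
`v'' = γ' × γ'' + γ × γ'''`, while `v × v' = (γ × γ') × (γ × γ'') = D γ` with
`D = γ · (γ' × γ'')`, so `v'' · (v × v') = D²`.
-/

open Matrix WithLp Filter Topology

local notation "E3" => EuclideanSpace ℝ (Fin 3)

lemma cross3_eq_toLp_crossProduct (a b : E3) : cross3 a b = toLp 2 (ofLp a ⨯₃ ofLp b) := by
  rw [cross_apply]; rfl

lemma inner_cross3_eq_dotProduct (a b c : E3) :
    ⟪a, cross3 b c⟫ = ofLp a ⬝ᵥ ofLp b ⨯₃ ofLp c := by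
  rw [cross3_eq_toLp_crossProduct, EuclideanSpace.inner_eq_star_dotProduct, star_trivial,
    dotProduct_comm]

lemma cross3_self (a : E3) : cross3 a a = 0 := by
  rw [cross3_eq_toLp_crossProduct, cross_self, toLp_zero]

lemma inner_self_cross3 (a b : E3) : ⟪a, cross3 a b⟫ = 0 := by
  rw [inner_cross3_eq_dotProduct, dot_self_cross]

lemma inner_cross3_permutation (a b c : E3) : ⟪a, cross3 b c⟫ = ⟪b, cross3 c a⟫ := by
  rw [inner_cross3_eq_dotProduct, inner_cross3_eq_dotProduct, triple_product_permutation]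

lemma cross3_cross3_cross3 (a b c : E3) :
    cross3 (cross3 a b) (cross3 a c) = ⟪a, cross3 b c⟫ • a := by
  rw [cross3_eq_toLp_crossProduct, inner_cross3_eq_dotProduct, cross3_eq_toLp_crossProduct,
    cross3_eq_toLp_crossProduct]
  simp only [cross_cross_eq_smul_sub_smul, dot_self_cross, zero_smul, zero_sub]
  rw [triple_product_permutation, ← cross_anticomm, dotProduct_neg, neg_smul, neg_neg]
  rfl

lemma norm_cross3_sq (a b : E3) : ‖cross3 a b‖ ^ 2 = ‖a‖ ^ 2 * ‖b‖ ^ 2 - ⟪a, b⟫ ^ 2 := by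
  simp only [← real_inner_self_eq_norm_sq, EuclideanSpace.inner_eq_star_dotProduct, star_trivial,
    cross3_eq_toLp_crossProduct, cross_dot_cross, dotProduct_comm (ofLp b) (ofLp a)]
  ring

lemma inner_add_cross3_smul (a b c p q : ℝ) (u v w : E3) :
    ⟪a • w + b • v + c • u, cross3 (p • u) (p • v + q • u)⟫ = a * p ^ 2 * ⟪w, cross3 u v⟫ := by
  simp only [inner_cross3_eq_dotProduct, ofLp_add, ofLp_smul, map_add, map_smul,
    LinearMap.smul_apply, cross_self, dotProduct_add, add_dotProduct, dotProduct_smul, smul_dotProduct, dot_self_cross,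
    dot_cross_self, smul_zero, dotProduct_zero, smul_eq_mul]
  ring

lemma span_eq_top_iff_inner_cross3_ne_zero (x y z : E3) :
    Submodule.span ℝ ({x, y, z} : Set E3) = ⊤ ↔ ⟪x, cross3 y z⟫ ≠ 0 := by
  let e := (EuclideanSpace.basisFun (Fin 3) ℝ).toBasis
  have hrange : Set.range ![x, y, z] = {x, y, z} := by
    simp only [range_cons, range_empty, Set.union_empty, Set.singleton_union]
  have hdet : e.det ![x, y, z] = ⟪x, cross3 y z⟫ := by
    rw [Module.Basis.det_apply, inner_cross3_eq_dotProduct, triple_product_eq_det, ← det_transpose]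
    congr 1
    ext i j
    fin_cases i <;> rfl
  rw [← hdet, ← isUnit_iff_ne_zero, ← e.is_basis_iff_det, hrange, iff_and_self]
  exact fun hspan =>
    linearIndependent_of_top_le_span_of_card_eq_finrank (hrange ▸ hspan.ge) (by simp)

theorem HasDerivAt.cross3 {f g : ℝ → E3} {f' g' : E3} {x : ℝ} (hf : HasDerivAt f f' x)
    (hg : HasDerivAt g g' x) :
    HasDerivAt (fun t => cross3 (f t) (g t)) (cross3 (f x) g' + cross3 f' (g x)) x := by
  let e := WithLp.linearEquiv 2 ℝ (Fin 3 → ℝ)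
  let B : E3 →L[ℝ] E3 →L[ℝ] E3 :=
    ((crossProduct.compl₁₂ e.toLinearMap e.toLinearMap).compr₂
      e.symm.toLinearMap).toContinuousBilinearMap
  have hB : ∀ a b, B a b = _root_.cross3 a b := fun a b => by
    rw [cross3_eq_toLp_crossProduct]; rfl
  simpa only [hB] using B.hasDerivAt_of_bilinear (fun _ => hf) (fun _ => hg)

section InnerProductSpace

variable {F : Type*} [NormedAddCommGroup F] [InnerProductSpace ℝ F]

theorem HasDerivAt.inner_eq_zero_of_eventually_norm_eq {γ : ℝ → F} {γ' : F} {θ r : ℝ}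
    (hγ : HasDerivAt γ γ' θ) (hnorm : ∀ᶠ t in 𝓝 θ, ‖γ t‖ = r) : ⟪γ θ, γ'⟫ = 0 := by
  have hconst : HasDerivAt (fun t => ‖γ t‖ ^ 2) 0 θ :=
    (hasDerivAt_const θ (r ^ 2)).congr_of_eventuallyEq (hnorm.mono fun t ht => congrArg (· ^ 2) ht)
  simpa using hγ.norm_sq.unique hconst

theorem HasDerivAt.norm_inv {f : ℝ → F} {f' : F} {x : ℝ} (hf : HasDerivAt f f' x)
    (h0 : f x ≠ 0) : HasDerivAt (fun t => ‖f t‖⁻¹) (-⟪f x, f'⟫ / ‖f x‖ ^ 3) x := by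
  have hpos : 0 < ‖f x‖ := norm_pos_iff.2 h0
  obtain ⟨d, hd⟩ : ∃ d, HasDerivAt (fun t => ‖f t‖) d x :=
    ⟨_, (hf.differentiableAt.norm ℝ h0).hasDerivAt⟩
  have hd_eq : d = ⟪f x, f'⟫ / ‖f x‖ := by
    have hsq : 2 * ‖f x‖ * d = 2 * ⟪f x, f'⟫ := by
      simpa using (hd.pow 2).unique hf.norm_sq
    field_simp
    linarith
  refine (hd.inv hpos.ne').congr_deriv ?_
  rw [hd_eq]
  field_simp

end InnerProductSpace

theorem inner_deriv_deriv_cross3_of_eventuallyEq_smul {η v v' : ℝ → E3} {φ φ' : ℝ → ℝ}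
    {θ : ℝ} {v'' : E3} (hφ : ∀ᶠ t in 𝓝 θ, HasDerivAt φ (φ' t) t)
    (hφ' : DifferentiableAt ℝ φ' θ) (hv : ∀ᶠ t in 𝓝 θ, HasDerivAt v (v' t) t)
    (hv' : HasDerivAt v' v'' θ) (hη : η =ᶠ[𝓝 θ] fun t => φ t • v t) :
    ⟪deriv (deriv η) θ, cross3 (η θ) (deriv η θ)⟫ = φ θ ^ 3 * ⟪v'', cross3 (v θ) (v' θ)⟫ := by
  have hη' : ∀ᶠ t in 𝓝 θ, HasDerivAt η (φ t • v' t + φ' t • v t) t := by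
    filter_upwards [hφ, hv, hη.eventuallyEq_nhds] with t hφt hvt hηt
    exact (hφt.smul hvt).congr_of_eventuallyEq hηt
  have hη'' := ((hφ.self_of_nhds.smul hv').add
    (hφ'.hasDerivAt.smul hv.self_of_nhds)).congr_of_eventuallyEq (hη'.mono fun t ht => ht.deriv)
  rw [hη''.deriv, hη'.self_of_nhds.deriv, hη.eq_of_nhds]
  calc _ = ⟪φ θ • v'' + (2 * φ' θ) • v' θ + deriv φ' θ • v θ,
        cross3 (φ θ • v θ) (φ θ • v' θ + φ' θ • v θ)⟫ := by congr 1; module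
    _ = _ := by rw [inner_add_cross3_smul]; ring

theorem inner_deriv_deriv_cross3_of_sphere {γ γ' γ'' η : ℝ → E3} {γ''' : E3} {θ : ℝ}
    (hsphere : ∀ᶠ t in 𝓝 θ, ‖γ t‖ = 1) (hd1 : ∀ᶠ t in 𝓝 θ, HasDerivAt γ (γ' t) t)
    (hd2 : ∀ᶠ t in 𝓝 θ, HasDerivAt γ' (γ'' t) t) (hd3 : HasDerivAt γ'' γ''' θ)
    (hγ' : γ' θ ≠ 0)
    (hη : ∀ᶠ t in 𝓝 θ, η t = ‖cross3 (γ t) (γ' t)‖⁻¹ • cross3 (γ t) (γ' t)) :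
    ⟪deriv (deriv η) θ, cross3 (η θ) (deriv η θ)⟫
      = ‖γ' θ‖⁻¹ ^ 3 * ⟪γ θ, cross3 (γ' θ) (γ'' θ)⟫ ^ 2 := by
  have hne : ∀ᶠ t in 𝓝 θ, γ' t ≠ 0 := hd2.self_of_nhds.continuousAt.eventually_ne hγ'
  have hnorm : ∀ᶠ t in 𝓝 θ, ‖cross3 (γ t) (γ' t)‖ = ‖γ' t‖ := by
    filter_upwards [hsphere, hsphere.eventually_nhds, hd1] with t ht1 hnear hdt
    have horth := hdt.inner_eq_zero_of_eventually_norm_eq hnear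
    rw [← sq_eq_sq₀ (norm_nonneg _) (norm_nonneg _), norm_cross3_sq, ht1, horth]
    ring
  have hφ : ∀ᶠ t in 𝓝 θ,
      HasDerivAt (fun s => ‖γ' s‖⁻¹) (-⟪γ' t, γ'' t⟫ / ‖γ' t‖ ^ 3) t := by
    filter_upwards [hd2, hne] with t hdt hnt
    exact hdt.norm_inv hnt
  have hφ' : DifferentiableAt ℝ (fun t => -⟪γ' t, γ'' t⟫ / ‖γ' t‖ ^ 3) θ :=
    (hd2.self_of_nhds.differentiableAt.inner ℝ hd3.differentiableAt).neg.div
      ((hd2.self_of_nhds.differentiableAt.norm ℝ hγ').pow 3) (by positivity)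
  have hv : ∀ᶠ t in 𝓝 θ,
      HasDerivAt (fun s => cross3 (γ s) (γ' s)) (cross3 (γ t) (γ'' t)) t := by
    filter_upwards [hd1, hd2] with t hd1t hd2t
    simpa only [cross3_self, add_zero] using hd1t.cross3 hd2t
  have hv' := hd1.self_of_nhds.cross3 hd3
  have hηv : η =ᶠ[𝓝 θ] fun t => ‖γ' t‖⁻¹ • cross3 (γ t) (γ' t) := by
    filter_upwards [hη, hnorm] with t hηt hnt
    rw [hηt, hnt]
  rw [inner_deriv_deriv_cross3_of_eventuallyEq_smul hφ hφ' hv hv' hηv, cross3_cross3_cross3,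
    inner_smul_right, inner_add_left, real_inner_comm (γ θ) (cross3 (γ θ) γ'''), inner_self_cross3,
    real_inner_comm (γ θ)]
  ring

theorem stmt_7_general (U : Set ℝ) (hU : IsOpen U)
    (γ γ' γ'' γ''' : ℝ → EuclideanSpace ℝ (Fin 3))
    (hsphere : ∀ θ ∈ U, ‖γ θ‖ = 1)
    (hd1 : ∀ θ ∈ U, HasDerivAt γ (γ' θ) θ)
    (hd2 : ∀ θ ∈ U, HasDerivAt γ' (γ'' θ) θ)
    (hd3 : ∀ θ ∈ U, HasDerivAt γ'' (γ''' θ) θ)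
    (hspan : ∀ θ ∈ U, Submodule.span ℝ {γ θ, γ' θ, γ'' θ} = ⊤)
    (η : ℝ → EuclideanSpace ℝ (Fin 3))
    (hη : ∀ θ ∈ U, η θ = ‖cross3 (γ θ) (γ' θ)‖⁻¹ • cross3 (γ θ) (γ' θ)) :
    ∀ θ ∈ U,
      ⟪deriv (deriv η) θ, cross3 (η θ) (deriv η θ)⟫
          = ‖γ' θ‖ ^ (-3 : ℤ) * ⟪γ θ, cross3 (γ' θ) (γ'' θ)⟫ ^ 2 ∧
      ⟪deriv (deriv η) θ, cross3 (η θ) (deriv η θ)⟫ ≠ 0 ∧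
      Submodule.span ℝ {η θ, deriv η θ, deriv (deriv η) θ} = ⊤ := by
  intro θ hθ
  have hU' : U ∈ 𝓝 θ := hU.mem_nhds hθ
  have hD := (span_eq_top_iff_inner_cross3_ne_zero _ _ _).1 (hspan θ hθ)
  have hγ' : γ' θ ≠ 0 := fun h => hD (by simp [h, inner_cross3_eq_dotProduct])
  have key := inner_deriv_deriv_cross3_of_sphere (eventually_of_mem hU' hsphere)
    (eventually_of_mem hU' hd1) (eventually_of_mem hU' hd2) (hd3 θ hθ) hγ'
    (eventually_of_mem hU' hη)
  have hne : ⟪deriv (deriv η) θ, cross3 (η θ) (deriv η θ)⟫ ≠ 0 := by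
    rw [key]
    exact mul_ne_zero (pow_ne_zero _ (inv_ne_zero (norm_ne_zero_iff.2 hγ'))) (pow_ne_zero _ hD)
  refine ⟨by rw [key, _root_.zpow_neg, zpow_ofNat, inv_pow], hne, ?_⟩
  rwa [span_eq_top_iff_inner_cross3_ne_zero, inner_cross3_permutation, inner_cross3_permutation]

/-- If `γ : U → S²` is a C³ curve with `span{γ, γ', γ''} = ℝ³` on `U`, then
`η = γ × γ' / |γ × γ'|` satisfies
`η''·(η × η') = |γ'|⁻³ (γ·(γ' × γ''))² ≠ 0`; consequently `span{η, η', η''} = ℝ³` on `U`. -/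
theorem stmt_7 (U : Set ℝ) (hU : IsOpen U)
    (γ γ' γ'' γ''' : ℝ → EuclideanSpace ℝ (Fin 3))
    (hsphere : ∀ θ ∈ U, ‖γ θ‖ = 1)
    (hd1 : ∀ θ ∈ U, HasDerivAt γ (γ' θ) θ)
    (hd2 : ∀ θ ∈ U, HasDerivAt γ' (γ'' θ) θ)
    (hd3 : ∀ θ ∈ U, HasDerivAt γ'' (γ''' θ) θ)
    (hcont : ContinuousOn γ''' U)
    (hspan : ∀ θ ∈ U, Submodule.span ℝ {γ θ, γ' θ, γ'' θ} = ⊤)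
    (η : ℝ → EuclideanSpace ℝ (Fin 3))
    (hη : ∀ θ ∈ U, η θ = ‖cross3 (γ θ) (γ' θ)‖⁻¹ • cross3 (γ θ) (γ' θ)) :
    ∀ θ ∈ U,
      ⟪deriv (deriv η) θ, cross3 (η θ) (deriv η θ)⟫
          = ‖γ' θ‖ ^ (-3 : ℤ) * ⟪γ θ, cross3 (γ' θ) (γ'' θ)⟫ ^ 2 ∧
      ⟪deriv (deriv η) θ, cross3 (η θ) (deriv η θ)⟫ ≠ 0 ∧
      Submodule.span ℝ {η θ, deriv η θ, deriv (deriv η) θ} = ⊤ :=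
  stmt_7_general U hU γ γ' γ'' γ''' hsphere hd1 hd2 hd3 hspan η hη
end
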